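/- arXiv:1806.06224 — 2 statements merged into one kernel-verified Lean document; each statement's English description precedes it below -/
import Mathlib

section
/- If $R(t)$ solves $\dot R = R\hat\Omega(t) - k R(R^TR - I)$ with $k>0$ and $R(0)\in SO(3)$, then $R(t)\in SO(3)$ for all $t$ in the domain of the solution; i.e., $SO(3)$ is invariant under the extended dynamics. -/
open Matrix

/-- The hat map `ℝ³ → ℝ^{3×3}`. -/
def hat (Ω : Fin 3 → ℝ) : Matrix (Fin 3) (Fin 3) ℝ :=
  !![0, -Ω 2, Ω 1; Ω 2, 0, -Ω 0; -Ω 1, Ω 0, 0]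

open Set

/-!
Let `X = RᵀR - 1` and `V = tr (XᵀX) = ‖X‖²_F`. Along the flow the `Ω`-terms drop out of `V̇`,
because `tr (S Â) = 0` for symmetric `S` and skew `Â`, leaving `V̇ = -4k ‖R X‖²_F ≤ 0`. As
`V (0) = 0` and `V ≥ 0`, `V` vanishes identically, i.e. `RᵀR = 1`. Then `det R = ±1` is continuous
on `[0, ∞)` and equals `1` at `0`, hence everywhere.
-/

section MatrixCalculus

variable {m n p : Type*} [Fintype n] {t : ℝ}

theorem hasDerivAt_matrix_mul_apply {A : ℝ → Matrix m n ℝ} {B : ℝ → Matrix n p ℝ}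
    {A' : Matrix m n ℝ} {B' : Matrix n p ℝ}
    (hA : ∀ i j, HasDerivAt (fun s => A s i j) (A' i j) t)
    (hB : ∀ i j, HasDerivAt (fun s => B s i j) (B' i j) t) (i : m) (j : p) :
    HasDerivAt (fun s => (A s * B s) i j) ((A' * B t + A t * B') i j) t := by
  simp only [mul_apply, Matrix.add_apply, ← Finset.sum_add_distrib]
  exact HasDerivAt.fun_sum fun l _ => (hA i l).mul (hB l j)

theorem hasDerivAt_matrix_trace {A : ℝ → Matrix n n ℝ} {A' : Matrix n n ℝ}
    (hA : ∀ i j, HasDerivAt (fun s => A s i j) (A' i j) t) :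
    HasDerivAt (fun s => (A s).trace) A'.trace t :=
  HasDerivAt.fun_sum fun i _ => hA i i

end MatrixCalculus

section Trace

variable {m n : Type*} [Fintype m] [Fintype n]

theorem trace_transpose_mul_self_nonneg (M : Matrix m n ℝ) : 0 ≤ (Mᵀ * M).trace := by
  simpa only [conjTranspose_eq_transpose_of_trivial] using
    (posSemidef_conjTranspose_mul_self M).trace_nonneg

theorem trace_transpose_mul_self_eq_zero_iff {M : Matrix m n ℝ} :
    (Mᵀ * M).trace = 0 ↔ M = 0 := by
  simpa only [conjTranspose_eq_transpose_of_trivial] using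
    trace_conjTranspose_mul_self_eq_zero_iff (A := M)

theorem trace_mul_eq_zero_of_isSymm {S A : Matrix n n ℝ} (hS : S.IsSymm) (hA : Aᵀ = -A) :
    (S * A).trace = 0 := by
  have h := trace_transpose (S * A)
  rw [transpose_mul, hA, hS.eq, neg_mul, trace_neg, trace_mul_comm] at h
  linarith

end Trace

section Flow

variable {n : Type*} [Fintype n] [DecidableEq n]

/-- Half the derivative of `‖RᵀR - 1‖²_F` along `Ṙ = R A - k R (RᵀR - 1)`. -/
theorem trace_gram_sub_one_mul_deriv (k : ℝ) {A : Matrix n n ℝ} (hA : Aᵀ = -A) (R : Matrix n n ℝ) :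
    ((Rᵀ * R - 1)ᵀ * ((R * A - k • (R * (Rᵀ * R - 1)))ᵀ * R
      + Rᵀ * (R * A - k • (R * (Rᵀ * R - 1))))).trace
      = -(2 * k) * ((R * (Rᵀ * R - 1))ᵀ * (R * (Rᵀ * R - 1))).trace := by
  set X := Rᵀ * R - 1
  set R' := R * A - k • (R * X)
  have hXs : X.IsSymm := (isSymm_transpose_mul_self R).sub isSymm_one
  have hRR : Rᵀ * R = X + 1 := (sub_add_cancel _ _).symm
  have hswap : (X * (R'ᵀ * R)).trace = (X * (Rᵀ * R')).trace := by
    rw [← trace_transpose, transpose_mul, transpose_mul, transpose_transpose, hXs.eq,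
      trace_mul_comm]
  have hexpand : X * (Rᵀ * R') = X * (X + 1) * A - k • ((R * X)ᵀ * (R * X)) := by
    simp only [R', transpose_mul, hXs.eq, Matrix.mul_sub, Matrix.mul_smul, ← hRR,
      Matrix.mul_assoc]
  have hsymm : (X * (X + 1)).IsSymm := by
    simp only [IsSymm, transpose_mul, transpose_add, hXs.eq, Matrix.mul_add, Matrix.mul_one]
  rw [hXs.eq, Matrix.mul_add, trace_add, hswap, hexpand, trace_sub,
    trace_mul_eq_zero_of_isSymm hsymm hA, trace_smul, smul_eq_mul]
  ring

theorem transpose_mul_self_eq_one_of_hasDerivAt {k : ℝ} (hk : 0 ≤ k) {A : ℝ → Matrix n n ℝ}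
    (hA : ∀ t, 0 ≤ t → (A t)ᵀ = -A t) {R : ℝ → Matrix n n ℝ}
    (hR : ∀ t, 0 ≤ t → ∀ i j, HasDerivAt (fun s => R s i j)
      ((R t * A t - k • (R t * ((R t)ᵀ * R t - 1))) i j) t)
    (h0 : (R 0)ᵀ * R 0 = 1) {t : ℝ} (ht : 0 ≤ t) : (R t)ᵀ * R t = 1 := by
  set X : ℝ → Matrix n n ℝ := fun s => (R s)ᵀ * R s - 1
  set R' : ℝ → Matrix n n ℝ := fun s => R s * A s - k • (R s * X s)
  set V : ℝ → ℝ := fun s => ((X s)ᵀ * X s).trace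
  have hXderiv : ∀ s, 0 ≤ s → ∀ i j,
      HasDerivAt (fun u => X u i j) (((R' s)ᵀ * R s + (R s)ᵀ * R' s) i j) s := fun s hs i j =>
    (hasDerivAt_matrix_mul_apply (A := fun u => (R u)ᵀ) (A' := (R' s)ᵀ)
      (fun i j => hR s hs j i) (hR s hs) i j).sub_const _
  have hVderiv : ∀ s, 0 ≤ s →
      HasDerivAt V (-(4 * k) * ((R s * X s)ᵀ * (R s * X s)).trace) s := by
    intro s hs
    refine (hasDerivAt_matrix_trace (hasDerivAt_matrix_mul_apply
      (A := fun u => (X u)ᵀ) (A' := ((R' s)ᵀ * R s + (R s)ᵀ * R' s)ᵀ)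
      (fun i j => hXderiv s hs j i) (hXderiv s hs))).congr_deriv ?_
    rw [trace_add, ← trace_transpose, transpose_mul, transpose_transpose,
      trace_gram_sub_one_mul_deriv k (hA s hs)]
    ring
  have hVanti : AntitoneOn V (Ici 0) :=
    antitoneOn_of_hasDerivWithinAt_nonpos (convex_Ici 0)
      (fun s hs => (hVderiv s hs).continuousAt.continuousWithinAt)
      (fun s hs => (hVderiv s (interior_subset hs)).hasDerivWithinAt) fun s _ =>
      mul_nonpos_of_nonpos_of_nonneg (by linarith) (trace_transpose_mul_self_nonneg _)
  have hV0 : V 0 = 0 := by simp [V, X, h0]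
  have hVt : V t = 0 :=
    le_antisymm (hV0 ▸ hVanti self_mem_Ici ht ht) (trace_transpose_mul_self_nonneg _)
  exact sub_eq_zero.1 (trace_transpose_mul_self_eq_zero_iff.1 hVt)

theorem det_eq_one_of_transpose_mul_self_eq_one {R : ℝ → Matrix n n ℝ}
    (hR : ContinuousOn R (Ici 0)) (horth : ∀ t, 0 ≤ t → (R t)ᵀ * R t = 1)
    (h0 : (R 0).det = 1) {t : ℝ} (ht : 0 ≤ t) : (R t).det = 1 := by
  have hsq : EqOn ((fun s => (R s).det) ^ 2) 1 (Ici 0) := fun s hs => by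
    simpa [sq, det_transpose] using congrArg det (horth s hs)
  rcases isPreconnected_Ici.eq_one_or_eq_neg_one_of_sq_eq
    (continuous_id.matrix_det.comp_continuousOn hR) hsq with h | h
  · exact h ht
  · have := h self_mem_Ici
    norm_num [h0] at this

end Flow

theorem hat_transpose (ω : Fin 3 → ℝ) : (hat ω)ᵀ = -hat ω := by
  ext i j
  fin_cases i <;> fin_cases j <;> simp [hat]

theorem stmt_9_general (k : ℝ) (hk : 0 < k) (Ω : ℝ → Fin 3 → ℝ)
    (R : ℝ → Matrix (Fin 3) (Fin 3) ℝ)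
    (hR : ∀ t, 0 ≤ t → ∀ i j, HasDerivAt (fun s => R s i j)
      ((R t * hat (Ω t) - k • (R t * ((R t)ᵀ * R t - 1))) i j) t)
    (h0 : (R 0)ᵀ * R 0 = 1 ∧ (R 0).det = 1) :
    ∀ t, 0 ≤ t → (R t)ᵀ * R t = 1 ∧ (R t).det = 1 := by
  have horth : ∀ t, 0 ≤ t → (R t)ᵀ * R t = 1 := fun t ht =>
    transpose_mul_self_eq_one_of_hasDerivAt hk.le (fun s _ => hat_transpose (Ω s)) hR h0.1 ht
  have hRcont : ContinuousOn R (Ici 0) := fun s hs =>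
    (continuousAt_pi.2 fun i => continuousAt_pi.2 fun j =>
      (hR s hs i j).continuousAt).continuousWithinAt
  exact fun t ht => ⟨horth t ht, det_eq_one_of_transpose_mul_self_eq_one hRcont horth h0.2 ht⟩

/-- `SO(3)` is invariant under the extended dynamics
`Ṙ = R hat(Ω(t)) - k R (RᵀR - I)`: if the solution starts in `SO(3)` it stays there. -/
theorem stmt_9 (k : ℝ) (hk : 0 < k) (Ω : ℝ → Fin 3 → ℝ) (hΩ : Continuous Ω)
    (R : ℝ → Matrix (Fin 3) (Fin 3) ℝ)
    (hR : ∀ t, 0 ≤ t → ∀ i j, HasDerivAt (fun s => R s i j)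
      ((R t * hat (Ω t) - k • (R t * ((R t)ᵀ * R t - 1))) i j) t)
    (h0 : (R 0)ᵀ * R 0 = 1 ∧ (R 0).det = 1) :
    ∀ t, 0 ≤ t → (R t)ᵀ * R t = 1 ∧ (R t).det = 1 :=
  stmt_9_general k hk Ω R hR h0
end

section
/- Consider $e=(e_1,e_2)\in\mathbb{R}^3\times\mathbb{R}^3$ with dynamics $\dot e = (A(t)-L(t)C)e$ where $A(t)=\begin{pmatrix}-\hat\Omega_0(t)&I\\0&\mathbb{I}^{-1}(\widehat{\mathbb{I}\Omega_0(t)}-\hat\Omega_0(t)\mathbb{I})\end{pmatrix}$, $C=(I\ 0)$, and $L(t)=(L_1(t);L_2(t))$ with $L_1(t)=-\hat\Omega_0(t)+\mathbb{I}^{-1}(\widehat{\mathbb{I}\Omega_0(t)}-\hat\Omega_0(t)\mathbb{I})+M_1$ and $L_2(t)=-(\hat{\dot\Omega}_0(t)+\dot L_1(t))+(\hat\Omega_0(t)+L_1(t))^2-M_1(\hat\Omega_0(t)+L_1(t))+M_2$, where $M_1,M_2$ are constant symmetric positive-definite $3\times3$ matrices and $\Omega_0$ is $C^1$ with $\Omega_0,\dot\Omega_0$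 bounded. Then the origin is uniformly exponentially stable for this system. -/
open Matrix

/-- The non-Kalman observer gain block `L₁(t)`. -/
noncomputable def L1 (J M₁ : Matrix (Fin 3) (Fin 3) ℝ) (Ω₀ : ℝ → Fin 3 → ℝ) (t : ℝ) :
    Matrix (Fin 3) (Fin 3) ℝ :=
  -hat (Ω₀ t) + J⁻¹ * (hat (J.mulVec (Ω₀ t)) - hat (Ω₀ t) * J) + M₁

/-- The derivative of `L₁(t)` (expressed through the derivative `dΩ` of `Ω₀`). -/
noncomputable def dL1 (J : Matrix (Fin 3) (Fin 3) ℝ) (dΩ : ℝ → Fin 3 → ℝ) (t : ℝ) :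
    Matrix (Fin 3) (Fin 3) ℝ :=
  -hat (dΩ t) + J⁻¹ * (hat (J.mulVec (dΩ t)) - hat (dΩ t) * J)

/-- The non-Kalman observer gain block `L₂(t)`. -/
noncomputable def L2 (J M₁ M₂ : Matrix (Fin 3) (Fin 3) ℝ) (Ω₀ dΩ : ℝ → Fin 3 → ℝ) (t : ℝ) :
    Matrix (Fin 3) (Fin 3) ℝ :=
  -(hat (dΩ t) + dL1 J dΩ t) + (hat (Ω₀ t) + L1 J M₁ Ω₀ t) ^ 2
    - M₁ * (hat (Ω₀ t) + L1 J M₁ Ω₀ t) + M₂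

/-!
Put `U = hat Ω₀ + L₁ = 𝕀⁻¹(hat(𝕀Ω₀) - hat(Ω₀)𝕀) + M₁`. The gain `L₂` is chosen so that
`w = e₂ - U e₁` satisfies `ė₁ = w`, `ẇ = -M₁ w - M₂ e₁`: in the variables `(e₁, w)` the error is
the constant-coefficient damped oscillator `ë₁ + M₁ ė₁ + M₂ e₁ = 0`. Its energy
`⟪M₂ e₁, e₁⟫ + ‖w‖²` only satisfies `V̇ = -2⟪M₁ w, w⟫ ≤ 0`, but adding a small cross term
`2ε⟪e₁, w⟫` gives a Lyapunov function comparable to `‖e₁‖² + ‖w‖²` with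
`V̇ ≤ -κ (‖e₁‖² + ‖w‖²)`, hence exponential decay. Since `Ω₀` is bounded so is `U`, and the change of variables
`(e₁, e₂) ↦ (e₁, w)` preserves exponential decay with uniform constants.
-/

open Real
open scoped RealInnerProductSpace

def ExpDecay (C lam : ℝ) (r : ℝ → ℝ) : Prop :=
  ∀ s t, s ≤ t → r t ≤ C * exp (-lam * (t - s)) * r s

namespace ExpDecay

variable {C lam : ℝ} {r : ℝ → ℝ}

theorem of_le_mul {r' : ℝ → ℝ} {k k' : ℝ} (h : ExpDecay C lam r) (hC : 0 ≤ C) (hk : 0 ≤ k)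
    (h₁ : ∀ t, r' t ≤ k * r t) (h₂ : ∀ t, r t ≤ k' * r' t) : ExpDecay (k * C * k') lam r' :=
  fun s t hst =>
  calc r' t ≤ k * r t := h₁ t
    _ ≤ k * (C * exp (-lam * (t - s)) * (k' * r' s)) := by
      gcongr
      exact (h s t hst).trans (by gcongr; exact h₂ s)
    _ = k * C * k' * exp (-lam * (t - s)) * r' s := by ring

theorem sqrt (h : ExpDecay C lam r) (hC : 0 ≤ C) :
    ExpDecay (√C) (lam / 2) (fun t => √(r t)) := fun s t hst => by
  have hexp : √(exp (-lam * (t - s))) = exp (-(lam / 2) * (t - s)) := by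
    rw [Real.sqrt_eq_iff_mul_self_eq_of_pos (exp_pos _), ← exp_add]; ring_nf
  calc √(r t) ≤ √(C * exp (-lam * (t - s)) * r s) := Real.sqrt_le_sqrt (h s t hst)
    _ = √C * exp (-(lam / 2) * (t - s)) * √(r s) := by
      rw [Real.sqrt_mul (by positivity), Real.sqrt_mul hC, hexp]

theorem add_of_sq_add_sq {f g : ℝ → ℝ} (hf : ∀ t, 0 ≤ f t) (hg : ∀ t, 0 ≤ g t)
    (h : ExpDecay C lam fun t => f t ^ 2 + g t ^ 2) (hC : 0 ≤ C) :
    ExpDecay (√2 * √C) (lam / 2) fun t => f t + g t := by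
  have := (h.sqrt hC).of_le_mul (Real.sqrt_nonneg C) (Real.sqrt_nonneg 2) (k' := 1)
    (r' := fun t => f t + g t)
    (fun t => by
      rw [← Real.sqrt_mul zero_le_two]
      exact Real.le_sqrt_of_sq_le (by nlinarith [sq_nonneg (f t - g t)]))
    (fun t => by
      rw [one_mul, Real.sqrt_le_iff]
      exact ⟨add_nonneg (hf t) (hg t), by nlinarith [hf t, hg t]⟩)
  rwa [mul_one] at this

end ExpDecay

theorem expDecay_of_hasDerivAt_le {V V' : ℝ → ℝ} {lam : ℝ} (hV : ∀ t, HasDerivAt V (V' t) t)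
    (hV' : ∀ t, V' t ≤ -lam * V t) : ExpDecay 1 lam V := by
  intro s t hst
  have hg : ∀ τ, HasDerivAt (fun τ => V τ * exp (lam * τ))
      ((V' τ + lam * V τ) * exp (lam * τ)) τ := fun τ =>
    ((hV τ).mul ((hasDerivAt_id' τ).const_mul lam).exp).congr_deriv (by ring)
  have hanti : Antitone fun τ => V τ * exp (lam * τ) :=
    antitone_of_hasDerivAt_nonpos hg fun τ =>
      mul_nonpos_of_nonpos_of_nonneg (by linarith [hV' τ]) (exp_pos _).le
  have key := mul_le_mul_of_nonneg_right (hanti hst) (exp_pos (-(lam * t))).le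
  simp only [mul_assoc, ← exp_add, add_neg_cancel, exp_zero, mul_one] at key
  rw [show lam * s + -(lam * t) = -lam * (t - s) by ring] at key
  linarith

theorem expDecay_of_lyapunov {V V' Q : ℝ → ℝ} {a b κ : ℝ} (ha : 0 < a) (hb : 0 < b) (hκ : 0 ≤ κ)
    (hV : ∀ t, HasDerivAt V (V' t) t) (hlow : ∀ t, a * Q t ≤ V t) (hup : ∀ t, V t ≤ b * Q t)
    (hV' : ∀ t, V' t ≤ -κ * Q t) : ExpDecay (b / a) (κ / b) Q := by
  have hVdecay : ExpDecay 1 (κ / b) V := expDecay_of_hasDerivAt_le hV fun t => by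
    have : κ / b * V t ≤ κ / b * (b * Q t) := by gcongr; exact hup t
    rw [show κ / b * (b * Q t) = κ * Q t by field_simp] at this
    linarith [hV' t]
  have := hVdecay.of_le_mul zero_le_one (inv_nonneg.2 ha.le)
    (fun t => by rw [inv_mul_eq_div, le_div_iff₀ ha, mul_comm]; exact hlow t) hup
  rwa [inv_mul_eq_div, one_div_mul_eq_div] at this

theorem norm_add_norm_sub_le {F : Type*} [SeminormedAddCommGroup F] {a b u : F} {K : ℝ}
    (hK : 0 ≤ K) (hu : ‖u‖ ≤ K * ‖a‖) : ‖a‖ + ‖b - u‖ ≤ (1 + K) * (‖a‖ + ‖b‖) := by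
  linarith [norm_sub_le b u, mul_nonneg hK (norm_nonneg b)]

section DampedOscillator

variable {E : Type*} [NormedAddCommGroup E] [InnerProductSpace ℝ E]

def dampedLyapunov (B : E →L[ℝ] E) (ε : ℝ) (x w : E) : ℝ :=
  ⟪B x, x⟫ + ‖w‖ ^ 2 + 2 * ε * ⟪x, w⟫

variable {A B : E →L[ℝ] E}

theorem hasDerivAt_dampedLyapunov (hB : ∀ x y, ⟪B x, y⟫ = ⟪x, B y⟫) (ε : ℝ) {x w : ℝ → E}
    {t : ℝ} (hx : HasDerivAt x (w t) t) (hw : HasDerivAt w (-A (w t) - B (x t)) t) :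
    HasDerivAt (fun t => dampedLyapunov B ε (x t) (w t))
      (-2 * ⟪A (w t), w t⟫ + 2 * ε * ‖w t‖ ^ 2 - 2 * ε * ⟪x t, A (w t)⟫
        - 2 * ε * ⟪B (x t), x t⟫) t := by
  have hBx := (B.hasFDerivAt.comp_hasDerivAt t hx).inner ℝ hx
  have hcross := (hx.inner ℝ hw).const_mul (2 * ε)
  refine ((hBx.add hw.norm_sq).add hcross).congr_deriv ?_
  simp only [Function.comp_apply, inner_sub_right, inner_neg_right, real_inner_self_eq_norm_sq,
    hB (w t), real_inner_comm (w t) (B (x t)), real_inner_comm (A (w t)) (w t),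
    real_inner_comm (B (x t)) (x t)]
  ring

theorem dampedLyapunov_le {ε : ℝ} (hε : 0 ≤ ε) (x w : E) :
    dampedLyapunov B ε x w ≤ (‖B‖ + 1 + ε) * (‖x‖ ^ 2 + ‖w‖ ^ 2) := by
  have hBx : ⟪B x, x⟫ ≤ ‖B‖ * ‖x‖ ^ 2 :=
    (real_inner_le_norm _ _).trans (by rw [sq, ← mul_assoc]; gcongr; exact B.le_opNorm x)
  have hxw : 2 * ⟪x, w⟫ ≤ ‖x‖ ^ 2 + ‖w‖ ^ 2 := by
    nlinarith [real_inner_le_norm x w, sq_nonneg (‖x‖ - ‖w‖)]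
  unfold dampedLyapunov
  linarith [mul_le_mul_of_nonneg_left hxw hε, mul_nonneg (norm_nonneg B) (sq_nonneg ‖w‖),
    sq_nonneg ‖x‖]

theorem le_dampedLyapunov {μ ε : ℝ} (hB : ∀ x, μ * ‖x‖ ^ 2 ≤ ⟪B x, x⟫) (hε : 0 ≤ ε) (x w : E) :
    (min μ 1 - ε) * (‖x‖ ^ 2 + ‖w‖ ^ 2) ≤ dampedLyapunov B ε x w := by
  have hxw : -(‖x‖ ^ 2 + ‖w‖ ^ 2) ≤ 2 * ⟪x, w⟫ := by
    nlinarith [neg_le_of_abs_le (abs_real_inner_le_norm x w), sq_nonneg (‖x‖ - ‖w‖)]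
  have h1 := mul_le_mul_of_nonneg_right (min_le_left μ 1) (sq_nonneg ‖x‖)
  have h2 := mul_le_mul_of_nonneg_right (min_le_right μ 1) (sq_nonneg ‖w‖)
  unfold dampedLyapunov
  linarith [hB x, mul_le_mul_of_nonneg_left hxw hε]

theorem deriv_dampedLyapunov_le {μ₁ μ₂ ε : ℝ} (hA : ∀ x, μ₁ * ‖x‖ ^ 2 ≤ ⟪A x, x⟫)
    (hB : ∀ x, μ₂ * ‖x‖ ^ 2 ≤ ⟪B x, x⟫) (hμ₂ : 0 < μ₂) (hε : 0 ≤ ε)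
    (hεA : ε * (2 + ‖A‖ ^ 2 / μ₂) ≤ μ₁) (x w : E) :
    -2 * ⟪A w, w⟫ + 2 * ε * ‖w‖ ^ 2 - 2 * ε * ⟪x, A w⟫ - 2 * ε * ⟪B x, x⟫
      ≤ -min μ₁ (ε * μ₂) * (‖x‖ ^ 2 + ‖w‖ ^ 2) := by
  have hyoung : 2 * |⟪x, A w⟫| ≤ μ₂ * ‖x‖ ^ 2 + ‖A‖ ^ 2 / μ₂ * ‖w‖ ^ 2 := by
    have hAw : |⟪x, A w⟫| ≤ ‖x‖ * (‖A‖ * ‖w‖) :=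
      (abs_real_inner_le_norm _ _).trans (by gcongr; exact A.le_opNorm w)
    have : 0 ≤ (μ₂ * ‖x‖ - ‖A‖ * ‖w‖) ^ 2 / μ₂ := by positivity
    rw [sub_sq, div_eq_mul_inv] at this
    field_simp at this ⊢
    nlinarith
  have h1 := mul_le_mul_of_nonneg_right (min_le_left μ₁ (ε * μ₂)) (sq_nonneg ‖w‖)
  have h2 := mul_le_mul_of_nonneg_right (min_le_right μ₁ (ε * μ₂)) (sq_nonneg ‖x‖)
  have hr : 0 ≤ (μ₁ - ε * (2 + ‖A‖ ^ 2 / μ₂)) * ‖w‖ ^ 2 :=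
    mul_nonneg (sub_nonneg.2 hεA) (sq_nonneg _)
  linarith [hA w, mul_le_mul_of_nonneg_left (hB x) hε, mul_le_mul_of_nonneg_left hyoung hε,
    mul_le_mul_of_nonneg_left (neg_abs_le ⟪x, A w⟫) hε]

theorem exists_expDecay_dampedOscillator {μ₁ μ₂ : ℝ} (hμ₁ : 0 < μ₁) (hμ₂ : 0 < μ₂)
    (hA : ∀ x, μ₁ * ‖x‖ ^ 2 ≤ ⟪A x, x⟫) (hB : ∀ x, μ₂ * ‖x‖ ^ 2 ≤ ⟪B x, x⟫)
    (hBsymm : ∀ x y, ⟪B x, y⟫ = ⟪x, B y⟫) :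
    ∃ C lam, 0 < C ∧ 0 < lam ∧ ∀ x w : ℝ → E, (∀ t, HasDerivAt x (w t) t) →
      (∀ t, HasDerivAt w (-A (w t) - B (x t)) t) → ExpDecay C lam fun t => ‖x t‖ + ‖w t‖ := by
  set ε := min (μ₁ / (2 + ‖A‖ ^ 2 / μ₂)) (min μ₂ 1 / 2)
  have hε : 0 < ε := by positivity
  have hεA : ε * (2 + ‖A‖ ^ 2 / μ₂) ≤ μ₁ := (le_div_iff₀ (by positivity)).1 (min_le_left _ _)
  have ha : 0 < min μ₂ 1 - ε := by
    linarith [min_le_right (μ₁ / (2 + ‖A‖ ^ 2 / μ₂)) (min μ₂ 1 / 2), lt_min hμ₂ one_pos]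
  have hκ : 0 < min μ₁ (ε * μ₂) := by positivity
  refine ⟨√2 * √((‖B‖ + 1 + ε) / (min μ₂ 1 - ε)), min μ₁ (ε * μ₂) / (‖B‖ + 1 + ε) / 2,
    by positivity, by positivity, fun x w hx hw => ?_⟩
  refine ExpDecay.add_of_sq_add_sq (fun t => norm_nonneg _) (fun t => norm_nonneg _) ?_
    (by positivity)
  exact expDecay_of_lyapunov ha (by positivity) hκ.le
    (fun t => hasDerivAt_dampedLyapunov hBsymm ε (hx t) (hw t))
    (fun t => le_dampedLyapunov hB hε.le _ _) (fun t => dampedLyapunov_le hε.le _ _)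
    (fun t => deriv_dampedLyapunov_le hA hB hμ₂ hε.le hεA _ _)

end DampedOscillator

theorem exists_pos_mul_sq_norm_le_inner {E : Type*} [NormedAddCommGroup E]
    [InnerProductSpace ℝ E] [FiniteDimensional ℝ E] (T : E →L[ℝ] E) (hT : ∀ x ≠ 0, 0 < ⟪T x, x⟫) :
    ∃ μ > 0, ∀ x, μ * ‖x‖ ^ 2 ≤ ⟪T x, x⟫ := by
  rcases subsingleton_or_nontrivial E with hE | hE
  · exact ⟨1, one_pos, fun x => by simp [Subsingleton.elim x 0]⟩
  obtain ⟨u, hu, hmin⟩ := (isCompact_sphere (0 : E) 1).exists_isMinOn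
    (NormedSpace.sphere_nonempty.2 zero_le_one)
    (by fun_prop : Continuous fun x => ⟪T x, x⟫).continuousOn
  have hu0 : u ≠ 0 := ne_zero_of_mem_unit_sphere ⟨u, hu⟩
  refine ⟨⟪T u, u⟫, hT u hu0, fun x => ?_⟩
  rcases eq_or_ne x 0 with rfl | hx
  · simp
  have hxs : ‖x‖⁻¹ • x ∈ Metric.sphere (0 : E) 1 := by simp [norm_smul, hx]
  have key : ⟪T u, u⟫ ≤ ⟪T (‖x‖⁻¹ • x), ‖x‖⁻¹ • x⟫ := hmin hxs
  simp only [map_smul, inner_smul_left, inner_smul_right, RCLike.conj_to_real] at key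
  have hx2 : 0 < ‖x‖ ^ 2 := by positivity
  calc ⟪T u, u⟫ * ‖x‖ ^ 2 ≤ ‖x‖⁻¹ * (‖x‖⁻¹ * ⟪T x, x⟫) * ‖x‖ ^ 2 := by gcongr
    _ = ⟪T x, x⟫ := by field_simp

namespace Matrix

variable {n : Type*} [Fintype n] [DecidableEq n] {M : Matrix n n ℝ}

theorem IsHermitian.inner_toEuclideanCLM_left (hM : M.IsHermitian) (x y : EuclideanSpace ℝ n) :
    ⟪toEuclideanCLM (𝕜 := ℝ) M x, y⟫ = ⟪x, toEuclideanCLM (𝕜 := ℝ) M y⟫ :=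
  isSymmetric_toEuclideanLin_iff.2 hM x y

theorem PosDef.exists_pos_mul_sq_norm_le_inner (hM : M.PosDef) :
    ∃ μ > 0, ∀ x : EuclideanSpace ℝ n, μ * ‖x‖ ^ 2 ≤ ⟪toEuclideanCLM (𝕜 := ℝ) M x, x⟫ := by
  refine _root_.exists_pos_mul_sq_norm_le_inner _ fun x hx => ?_
  rw [real_inner_comm, inner_toEuclideanCLM]
  simpa using hM.dotProduct_mulVec_pos (x := x.ofLp) (by simpa using hx)

end Matrix

theorem Matrix.PosDef.exists_expDecay_dampedOscillator {n : Type*} [Fintype n]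
    {M₁ M₂ : Matrix n n ℝ} (hM₁ : M₁.PosDef) (hM₂ : M₂.PosDef) :
    ∃ C lam, 0 < C ∧ 0 < lam ∧ ∀ x w : ℝ → n → ℝ, (∀ t, HasDerivAt x (w t) t) →
      (∀ t, HasDerivAt w (-(M₁ *ᵥ w t) - M₂ *ᵥ x t) t) →
      ExpDecay C lam fun t => ‖x t‖ + ‖w t‖ := by
  classical
  obtain ⟨μ₁, hμ₁, hA⟩ := hM₁.exists_pos_mul_sq_norm_le_inner
  obtain ⟨μ₂, hμ₂, hB⟩ := hM₂.exists_pos_mul_sq_norm_le_inner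
  obtain ⟨C, lam, hC, hlam, hdecay⟩ :=
    _root_.exists_expDecay_dampedOscillator hμ₁ hμ₂ hA hB
      hM₂.isHermitian.inner_toEuclideanCLM_left
  let T := EuclideanSpace.equiv n ℝ
  obtain ⟨k, hk, hTk⟩ := (T : EuclideanSpace ℝ n →L[ℝ] n → ℝ).bound
  obtain ⟨k', hk', hTk'⟩ := (T.symm : (n → ℝ) →L[ℝ] EuclideanSpace ℝ n).bound
  refine ⟨k * C * k', lam, by positivity, hlam, fun x w hx hw => ?_⟩
  have hx' : ∀ t, HasDerivAt (fun t => T.symm (x t)) (T.symm (w t)) t := fun t =>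
    T.symm.hasFDerivAt.comp_hasDerivAt t (hx t)
  have hw' : ∀ t, HasDerivAt (fun t => T.symm (w t))
      (-toEuclideanCLM (𝕜 := ℝ) M₁ (T.symm (w t))
        - toEuclideanCLM (𝕜 := ℝ) M₂ (T.symm (x t))) t := fun t => by
      have hT (M : Matrix n n ℝ) (v : n → ℝ) :
          T.symm (M *ᵥ v) = toEuclideanCLM (𝕜 := ℝ) M (T.symm v) := rfl
      simpa [Function.comp_def, hT] using T.symm.hasFDerivAt.comp_hasDerivAt t (hw t)
  refine (hdecay _ _ hx' hw').of_le_mul hC.le hk.le (fun t => ?_) (fun t => ?_)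
  · have h₁ := hTk (T.symm (x t))
    have h₂ := hTk (T.symm (w t))
    simp only [ContinuousLinearEquiv.coe_coe, ContinuousLinearEquiv.apply_symm_apply] at h₁ h₂
    linarith
  · have h₁ := hTk' (x t)
    have h₂ := hTk' (w t)
    simp only [ContinuousLinearEquiv.coe_coe] at h₁ h₂
    linarith

section ObserverError

-- The `L∞` operator norm on matrices is the one for which `‖A *ᵥ v‖ ≤ ‖A‖ * ‖v‖` with the sup norm.
attribute [local instance] Matrix.linftyOpNormedAddCommGroup Matrix.linftyOpNormedSpace

theorem HasDerivAt.mulVec {m n : Type*} [Fintype m] [Fintype n] {U : ℝ → Matrix m n ℝ}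
    {U' : Matrix m n ℝ} {v : ℝ → n → ℝ} {v' : n → ℝ} {t : ℝ} (hU : HasDerivAt U U' t)
    (hv : HasDerivAt v v' t) : HasDerivAt (fun s => U s *ᵥ v s) (U t *ᵥ v' + U' *ᵥ v t) t :=
  let B : Matrix m n ℝ →L[ℝ] (n → ℝ) →L[ℝ] m → ℝ := LinearMap.toContinuousLinearMap
    (LinearMap.toContinuousLinearMap.toLinearMap ∘ₗ Matrix.mulVecBilin ℝ ℝ)
  B.hasDerivAt_of_bilinear (fun _ => hU) (fun _ => hv)

theorem hasDerivAt_sub_mulVec_of_cascade {n : Type*} [Fintype n] [DecidableEq n]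
    {U : ℝ → Matrix n n ℝ} {U' M₁ M₂ : Matrix n n ℝ} {e₁ e₂ : ℝ → n → ℝ} {t : ℝ}
    (hU : HasDerivAt U U' t)
    (h₁ : HasDerivAt e₁ (e₂ t - U t *ᵥ e₁ t) t)
    (h₂ : HasDerivAt e₂ ((U t - M₁) *ᵥ e₂ t - (-U' + U t ^ 2 - M₁ * U t + M₂) *ᵥ e₁ t) t) :
    HasDerivAt (fun s => e₂ s - U s *ᵥ e₁ s) (-(M₁ *ᵥ (e₂ t - U t *ᵥ e₁ t)) - M₂ *ᵥ e₁ t) t := by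
  refine (h₂.sub (hU.mulVec h₁)).congr_deriv ?_
  simp only [sub_mulVec, add_mulVec, neg_mulVec, mulVec_sub, pow_two, mulVec_mulVec]
  abel

theorem hat_add (a b : Fin 3 → ℝ) : hat (a + b) = hat a + hat b := by
  ext i j; fin_cases i <;> fin_cases j <;> simp [hat] <;> ring

theorem hat_smul (c : ℝ) (a : Fin 3 → ℝ) : hat (c • a) = c • hat a := by
  ext i j; fin_cases i <;> fin_cases j <;> simp [hat]

/-- The block `𝕀⁻¹(hat(𝕀Ω₀) - hat(Ω₀)𝕀)` of `A(t)`, as a linear function of `Ω₀(t)`. -/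
noncomputable def gyroscopicTerm (J : Matrix (Fin 3) (Fin 3) ℝ) :
    (Fin 3 → ℝ) →ₗ[ℝ] Matrix (Fin 3) (Fin 3) ℝ where
  toFun Ω := J⁻¹ * (hat (J *ᵥ Ω) - hat Ω * J)
  map_add' a b := by simp only [mulVec_add, hat_add, add_mul, ← mul_add]; abel_nf
  map_smul' c a := by simp [mulVec_smul, hat_smul, ← smul_sub]

variable {J M₁ M₂ : Matrix (Fin 3) (Fin 3) ℝ} {Ω₀ dΩ : ℝ → Fin 3 → ℝ}

theorem hat_add_L1 (t : ℝ) : hat (Ω₀ t) + L1 J M₁ Ω₀ t = gyroscopicTerm J (Ω₀ t) + M₁ := by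
  simp only [L1, gyroscopicTerm, LinearMap.coe_mk, AddHom.coe_mk]
  abel

theorem hat_add_dL1 (t : ℝ) : hat (dΩ t) + dL1 J dΩ t = gyroscopicTerm J (dΩ t) := by
  simp only [dL1, gyroscopicTerm, LinearMap.coe_mk, AddHom.coe_mk]
  abel

noncomputable def cascadeVar (J M₁ : Matrix (Fin 3) (Fin 3) ℝ) (Ω₀ e₁ e₂ : ℝ → Fin 3 → ℝ)
    (t : ℝ) : Fin 3 → ℝ :=
  e₂ t - (gyroscopicTerm J (Ω₀ t) + M₁) *ᵥ e₁ t

theorem hasDerivAt_cascadeVar {e₁ e₂ : ℝ → Fin 3 → ℝ} (hderiv : ∀ t, HasDerivAt Ω₀ (dΩ t) t)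
    (h₁ : ∀ t, HasDerivAt e₁ ((-hat (Ω₀ t) - L1 J M₁ Ω₀ t) *ᵥ e₁ t + e₂ t) t)
    (h₂ : ∀ t, HasDerivAt e₂ ((J⁻¹ * (hat (J *ᵥ Ω₀ t) - hat (Ω₀ t) * J)) *ᵥ e₂ t
      - L2 J M₁ M₂ Ω₀ dΩ t *ᵥ e₁ t) t) :
    (∀ t, HasDerivAt e₁ (cascadeVar J M₁ Ω₀ e₁ e₂ t) t) ∧
      ∀ t, HasDerivAt (cascadeVar J M₁ Ω₀ e₁ e₂)
        (-(M₁ *ᵥ cascadeVar J M₁ Ω₀ e₁ e₂ t) - M₂ *ᵥ e₁ t) t := by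
  have he₁ (t : ℝ) : HasDerivAt e₁ (cascadeVar J M₁ Ω₀ e₁ e₂ t) t := by
    convert h₁ t using 1
    rw [cascadeVar, sub_eq_neg_add, ← neg_mulVec, ← hat_add_L1, neg_add']
  refine ⟨he₁, fun t =>
    hasDerivAt_sub_mulVec_of_cascade (U' := gyroscopicTerm J (dΩ t)) ?_ (he₁ t) ?_⟩
  · exact ((gyroscopicTerm J).toContinuousLinearMap.hasFDerivAt.comp_hasDerivAt t
      (hderiv t)).add_const M₁
  · convert h₂ t using 3
    · simp [gyroscopicTerm]
    · rw [L2, hat_add_L1, hat_add_dL1]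

theorem exists_norm_gyroscopicTerm_add_mulVec_le (J M₁ : Matrix (Fin 3) (Fin 3) ℝ)
    {Ω₀ : ℝ → Fin 3 → ℝ} (hΩ : ∃ c, ∀ t, ‖Ω₀ t‖ ≤ c) :
    ∃ K ≥ 0, ∀ t v, ‖(gyroscopicTerm J (Ω₀ t) + M₁) *ᵥ v‖ ≤ K * ‖v‖ := by
  obtain ⟨c, hc⟩ := hΩ
  let G : (Fin 3 → ℝ) →L[ℝ] (Fin 3 → ℝ) →L[ℝ] Fin 3 → ℝ := LinearMap.toContinuousLinearMap
    (LinearMap.toContinuousLinearMap.toLinearMap ∘ₗ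
      (Matrix.mulVecBilin ℝ ℝ).comp (gyroscopicTerm J))
  have hc0 : 0 ≤ c := (norm_nonneg _).trans (hc 0)
  refine ⟨‖G‖ * c + ‖M₁‖, by positivity, fun t v => ?_⟩
  calc ‖(gyroscopicTerm J (Ω₀ t) + M₁) *ᵥ v‖ ≤ ‖G (Ω₀ t) v‖ + ‖M₁ *ᵥ v‖ := by
        rw [add_mulVec]; exact norm_add_le _ _
    _ ≤ ‖G‖ * c * ‖v‖ + ‖M₁‖ * ‖v‖ := by
        gcongr
        · exact (G.le_opNorm₂ _ _).trans (by gcongr; exact hc t)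
        · exact linfty_opNorm_mulVec _ _
    _ = (‖G‖ * c + ‖M₁‖) * ‖v‖ := by ring

end ObserverError

theorem stmt_19_general (J : Matrix (Fin 3) (Fin 3) ℝ)
    (M₁ M₂ : Matrix (Fin 3) (Fin 3) ℝ)
    (hM₁ : M₁.PosDef) (hM₂ : M₂.PosDef)
    (Ω₀ dΩ : ℝ → Fin 3 → ℝ)
    (hderiv : ∀ t, HasDerivAt Ω₀ (dΩ t) t)
    (hΩbdd : ∃ c : ℝ, ∀ t, ‖Ω₀ t‖ ≤ c) :
    ∃ M lam : ℝ, 0 < M ∧ 0 < lam ∧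
      ∀ e₁ e₂ : ℝ → Fin 3 → ℝ,
        (∀ t, HasDerivAt e₁
          ((-hat (Ω₀ t) - L1 J M₁ Ω₀ t).mulVec (e₁ t) + e₂ t) t) →
        (∀ t, HasDerivAt e₂
          ((J⁻¹ * (hat (J.mulVec (Ω₀ t)) - hat (Ω₀ t) * J)).mulVec (e₂ t)
            - (L2 J M₁ M₂ Ω₀ dΩ t).mulVec (e₁ t)) t) →
        ∀ s t, 0 ≤ s → s ≤ t →
          ‖e₁ t‖ + ‖e₂ t‖ ≤ M * Real.exp (-lam * (t - s)) * (‖e₁ s‖ + ‖e₂ s‖) := by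
  obtain ⟨C, lam, hC, hlam, hdecay⟩ := hM₁.exists_expDecay_dampedOscillator hM₂
  obtain ⟨K, hK, hUK⟩ := exists_norm_gyroscopicTerm_add_mulVec_le J M₁ hΩbdd
  refine ⟨(1 + K) * C * (1 + K), lam, by positivity, hlam, fun e₁ e₂ h₁ h₂ s t _ hst => ?_⟩
  obtain ⟨hx, hw⟩ := hasDerivAt_cascadeVar hderiv h₁ h₂
  refine (hdecay e₁ _ hx hw).of_le_mul hC.le (by positivity) (fun τ => ?_)
    (fun τ => norm_add_norm_sub_le hK (hUK τ (e₁ τ))) s t hst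
  simpa [cascadeVar] using norm_add_norm_sub_le (b := cascadeVar J M₁ Ω₀ e₁ e₂ τ) hK
    ((norm_neg _).trans_le (hUK τ (e₁ τ)))

/-- With the non-Kalman observer gains `L₁, L₂` built from constant symmetric
positive-definite matrices `M₁, M₂`, the observation error dynamics
`ė = (A(t) - L(t)C)e`, i.e. `ė₁ = (-hat Ω₀ - L₁)e₁ + e₂`,
`ė₂ = 𝕀⁻¹(hat(𝕀Ω₀) - hat(Ω₀)𝕀)e₂ - L₂ e₁`, is uniformly exponentially stable. -/
theorem stmt_19 (J : Matrix (Fin 3) (Fin 3) ℝ) (hJ : J.PosDef) (hJsym : Jᵀ = J)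
    (M₁ M₂ : Matrix (Fin 3) (Fin 3) ℝ)
    (hM₁ : M₁.PosDef) (hM₁sym : M₁ᵀ = M₁) (hM₂ : M₂.PosDef) (hM₂sym : M₂ᵀ = M₂)
    (Ω₀ dΩ : ℝ → Fin 3 → ℝ) (hdΩcont : Continuous dΩ)
    (hderiv : ∀ t, HasDerivAt Ω₀ (dΩ t) t)
    (hΩbdd : ∃ c : ℝ, ∀ t, ‖Ω₀ t‖ ≤ c) (hdΩbdd : ∃ c : ℝ, ∀ t, ‖dΩ t‖ ≤ c) :
    ∃ M lam : ℝ, 0 < M ∧ 0 < lam ∧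
      ∀ e₁ e₂ : ℝ → Fin 3 → ℝ,
        (∀ t, HasDerivAt e₁
          ((-hat (Ω₀ t) - L1 J M₁ Ω₀ t).mulVec (e₁ t) + e₂ t) t) →
        (∀ t, HasDerivAt e₂
          ((J⁻¹ * (hat (J.mulVec (Ω₀ t)) - hat (Ω₀ t) * J)).mulVec (e₂ t)
            - (L2 J M₁ M₂ Ω₀ dΩ t).mulVec (e₁ t)) t) →
        ∀ s t, 0 ≤ s → s ≤ t →
          ‖e₁ t‖ + ‖e₂ t‖ ≤ M * Real.exp (-lam * (t - s)) * (‖e₁ s‖ + ‖e₂ s‖) :=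
  stmt_19_general J M₁ M₂ hM₁ hM₂ Ω₀ dΩ hderiv hΩbdd
end
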